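/- arXiv:1512.05110 — 2 statements merged into one kernel-verified Lean document; each statement's English description precedes it below -/
import Mathlib

section
/- Let N be a positive integer, E a nonempty subset of {1,...,N}, ε ≥ 0, and p_1,...,p_N nonnegative reals with p_i ≤ exp(ε)·p_j for all i,j, and assume Σ_{i=1}^N p_i > 0. Then the equivalence-class average (1/|E|)·Σ_{i∈E} p_i is at most t times the global average (1/N)·Σ_{i=1}^N p_i, where t = (N/|E|)·(1 + ((N−|E|)/|E|)·exp(−ε))^{−1}. -/
open Finset Real

/-! Comparing each element of `E` with each element of its complement gives
`e^{-ε} · (∑_E p) · (N - |E|) ≤ |E| · ∑_{Eᶜ} p`, i.e. the mass outside `E` is at least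
`((N - |E|) / |E|) · e^{-ε}` times the mass inside; adding `∑_E p` to both sides bounds `∑_E p`
by `(∑ p) / (1 + ((N - |E|) / |E|) · e^{-ε})`, which is the claim after dividing by `|E|`. -/

theorem Finset.mul_sum_mul_card_le_card_mul_sum {ι : Type*} (s t : Finset ι) (f : ι → ℝ) (r : ℝ)
    (hf : ∀ i ∈ s, ∀ j ∈ t, r * f i ≤ f j) :
    r * (∑ i ∈ s, f i) * #t ≤ #s * ∑ j ∈ t, f j :=
  calc r * (∑ i ∈ s, f i) * #t = ∑ i ∈ s, ∑ _j ∈ t, r * f i := by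
        simp only [sum_const, nsmul_eq_mul]; rw [← mul_sum, ← mul_sum]; ring
    _ ≤ ∑ _i ∈ s, ∑ j ∈ t, f j := sum_le_sum fun i hi => sum_le_sum fun j hj => hf i hi j hj
    _ = #s * ∑ j ∈ t, f j := by rw [sum_const, nsmul_eq_mul]

theorem Finset.sum_mul_one_add_le_sum {ι : Type*} [Fintype ι] [DecidableEq ι] (s : Finset ι)
    (hs : s.Nonempty) (f : ι → ℝ) (r : ℝ) (hf : ∀ i ∈ s, ∀ j ∉ s, r * f i ≤ f j) :
    (∑ i ∈ s, f i) * (1 + ((Fintype.card ι - #s) / #s) * r) ≤ ∑ i, f i := by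
  have hcard : (0 : ℝ) < #s := by exact_mod_cast hs.card_pos
  have hcompl : ((#sᶜ : ℕ) : ℝ) = Fintype.card ι - #s := by
    rw [card_compl, Nat.cast_sub (card_le_univ s)]
  have hcross := mul_sum_mul_card_le_card_mul_sum s sᶜ f r
    fun i hi j hj => hf i hi j (mem_compl.mp hj)
  rw [hcompl] at hcross
  rw [← sum_add_sum_compl s f, mul_one_add, add_le_add_iff_left, div_mul_eq_mul_div, mul_div_assoc',
    div_le_iff₀ hcard]
  linarith

theorem stmt_1_general (N : ℕ) (E : Finset (Fin N))
    (ε : ℝ) (p : Fin N → ℝ)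
    (hdp : ∀ i j, p i ≤ Real.exp ε * p j) :
    (1 / (E.card : ℝ)) * ∑ i ∈ E, p i ≤
      ((N : ℝ) / E.card) * (1 + (((N : ℝ) - E.card) / E.card) * Real.exp (-ε))⁻¹ *
        ((1 / (N : ℝ)) * ∑ i, p i) := by
  rcases E.eq_empty_or_nonempty with rfl | hE
  · simp -- `1 / 0 = 0` and `N / 0 = 0`: both sides vanish
  have hEN : (#E : ℝ) ≤ N := by exact_mod_cast card_le_univ E |>.trans_eq (Fintype.card_fin N)
  have hN : (0 : ℝ) < N := (Nat.cast_pos.mpr hE.card_pos).trans_le hEN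
  have hratio : ∀ i j, Real.exp (-ε) * p i ≤ p j := fun i j => by
    rw [Real.exp_neg, inv_mul_le_iff₀ (exp_pos ε)]; exact hdp i j
  have hbound := E.sum_mul_one_add_le_sum hE p _ fun i _ j _ => hratio i j
  rw [Fintype.card_fin] at hbound
  have hD : 0 < 1 + ((N - #E : ℝ) / #E) * Real.exp (-ε) := by
    have := sub_nonneg.mpr hEN
    positivity
  calc (1 / (#E : ℝ)) * ∑ i ∈ E, p i
      ≤ (1 / #E) * ((∑ i, p i) / (1 + ((N - #E : ℝ) / #E) * Real.exp (-ε))) := by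
        gcongr; rwa [le_div_iff₀ hD]
    _ = _ := by field_simp

theorem stmt_1 (N : ℕ) (hN : 0 < N) (E : Finset (Fin N)) (hE : E.Nonempty)
    (ε : ℝ) (hε : 0 ≤ ε) (p : Fin N → ℝ) (hp : ∀ i, 0 ≤ p i)
    (hdp : ∀ i j, p i ≤ Real.exp ε * p j)
    (hpos : 0 < ∑ i, p i) :
    (1 / (E.card : ℝ)) * ∑ i ∈ E, p i ≤
      ((N : ℝ) / E.card) * (1 + (((N : ℝ) - E.card) / E.card) * Real.exp (-ε))⁻¹ *
        ((1 / (N : ℝ)) * ∑ i, p i) :=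
  stmt_1_general N E ε p hdp
end

section
/- Let N be a positive integer, E a nonempty subset of {1,...,N}, ε ≥ 0, and p_1,...,p_N nonnegative reals with p_i ≤ exp(ε)·p_j for all i,j, with Σ_{i∈E} p_i > 0. Then the global average (1/N)·Σ_{i=1}^N p_i is at most t times the within-class average (1/|E|)·Σ_{i∈E} p_i, where t = (|E|/N)·(1 + ((N−|E|)/|E|)·exp(ε)). -/
open Finset Real

/- Comparing every term outside `E` with every term inside it gives
`|E| · Σ_{i ∉ E} p_i ≤ e^ε (N - |E|) Σ_{i ∈ E} p_i`; adding `|E| · Σ_{i ∈ E} p_i` to both sides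
and dividing by `N |E|` is the claim. -/

theorem card_mul_sum_le_mul_card_mul_sum {ι R : Type*} [CommSemiring R] [PartialOrder R]
    [IsOrderedRing R] (A B : Finset ι) {c : R} {p : ι → R} (h : ∀ i j, p i ≤ c * p j) :
    #A * ∑ i ∈ B, p i ≤ c * #B * ∑ j ∈ A, p j :=
  calc #A * ∑ i ∈ B, p i = ∑ i ∈ B, ∑ _j ∈ A, p i := by simp [mul_sum]
    _ ≤ ∑ _i ∈ B, ∑ j ∈ A, c * p j := sum_le_sum fun i _ ↦ sum_le_sum fun j _ ↦ h i j
    _ = c * #B * ∑ j ∈ A, p j := by simp only [sum_const, nsmul_eq_mul, ← mul_sum]; ring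

theorem sum_le_of_forall_le_mul {ι : Type*} [Fintype ι] [DecidableEq ι] (E : Finset ι)
    (hE : E.Nonempty) {c : ℝ} {p : ι → ℝ} (h : ∀ i j, p i ≤ c * p j) :
    ∑ i, p i ≤ (1 + ((Fintype.card ι : ℝ) - #E) / #E * c) * ∑ i ∈ E, p i := by
  have hk : (0 : ℝ) < #E := by exact_mod_cast hE.card_pos
  have hcard_mul : #E * ∑ i ∈ Eᶜ, p i ≤ c * ((Fintype.card ι : ℝ) - #E) * ∑ i ∈ E, p i := by
    simpa [card_compl, Nat.cast_sub (card_le_univ E)] using card_mul_sum_le_mul_card_mul_sum E Eᶜ h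
  rw [← sum_add_sum_compl E p]
  have hcompl : ∑ i ∈ Eᶜ, p i ≤ ((Fintype.card ι : ℝ) - #E) / #E * c * ∑ i ∈ E, p i := by
    rw [div_mul_eq_mul_div, div_mul_eq_mul_div, le_div_iff₀ hk]
    linarith
  linarith

theorem stmt_2_general (N : ℕ) (E : Finset (Fin N)) (hE : E.Nonempty)
    (ε : ℝ) (p : Fin N → ℝ)
    (hdp : ∀ i j, p i ≤ Real.exp ε * p j) :
    (1 / (N : ℝ)) * ∑ i, p i ≤
      ((E.card : ℝ) / N) * (1 + (((N : ℝ) - E.card) / E.card) * Real.exp ε) *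
        ((1 / (E.card : ℝ)) * ∑ i ∈ E, p i) := by
  have hk : (E.card : ℝ) ≠ 0 := by exact_mod_cast hE.card_pos.ne'
  calc (1 / (N : ℝ)) * ∑ i, p i
      ≤ 1 / N * ((1 + ((N : ℝ) - #E) / #E * Real.exp ε) * ∑ i ∈ E, p i) := by
        gcongr
        simpa using sum_le_of_forall_le_mul E hE hdp
    _ = _ := by field_simp

theorem stmt_2 (N : ℕ) (hN : 0 < N) (E : Finset (Fin N)) (hE : E.Nonempty)
    (ε : ℝ) (hε : 0 ≤ ε) (p : Fin N → ℝ) (hp : ∀ i, 0 ≤ p i)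
    (hdp : ∀ i j, p i ≤ Real.exp ε * p j)
    (hpos : 0 < ∑ i ∈ E, p i) :
    (1 / (N : ℝ)) * ∑ i, p i ≤
      ((E.card : ℝ) / N) * (1 + (((N : ℝ) - E.card) / E.card) * Real.exp ε) *
        ((1 / (E.card : ℝ)) * ∑ i ∈ E, p i) :=
  stmt_2_general N E hE ε p hdp
end
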